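/- Let α > −1, let q ≥ 0 be an integer, and let n ≥ 1 be an integer. For integers 0 ≤ i < j ≤ n−1, the polynomials P_{2n−2i}^{α+i,q+i} and P_{2n−2j}^{α+j,q+j} have only real zeros, and denoting by x_{2m,2m}^{β,r} the largest zero of P_{2m}^{β,r}, one has x_{2n−2j,2n−2j}^{α+j,q+j} < x_{2n−2i,2n−2i}^{α+i,q+i}. -/

import Mathlib

/-!
Put `t = x ^ 2`. Then `P_{2m}^{β,r}(x) = Q(t)`, where `Q = Q_m^{a,b}` with `a = r + 1/2`,
`b = β` is the monic orthogonal polynomial of degree `m` on `(0, 1)` for the weight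
`w_{a,b}(t) = t^a (1-t)^b`.
The Rodrigues-type ladder `(w_{a+1,b+1} Q_m^{a+1,b+1})' = -(a+b+m+2) w_{a,b} Q_{m+1}^{a,b}` and
Rolle's theorem show, by induction on `m`, that `Q_m^{a,b}` has `m` simple zeros in `(0, 1)`, so
`P_{2m}` has the `2m` real zeros `±√t`. Moreover the `δ`-th derivative of `Q_{m+δ}^{a,b}` is a
multiple of `Q_m^{a+δ,b+δ}`, and for `δ ≥ 1` the `δ`-th derivative of a polynomial with simple
real zeros is positive from its largest zero on. Hence every zero of `Q_m^{a+δ,b+δ}` lies below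
the largest zero of `Q_{m+δ}^{a,b}`, which is the comparison between levels `i` and `j`.
-/

open MeasureTheory intervalIntegral Polynomial

/-- Pochhammer symbol `(a)_k = a (a+1) ⋯ (a+k-1)`. -/
noncomputable def poch (a : ℝ) (k : ℕ) : ℝ := ∏ i ∈ Finset.range k, (a + i)

/-- `Peven α q n x = P_{2n}^{α,q}(x)`, the monic generalized Gegenbauer-type polynomial
`Σ_{k=0}^{n} (−n)_k (−n−q−1/2)_k / (k! (−2n−α−q−1/2)_k) x^{2n−2k}`. -/
noncomputable def Peven (α : ℝ) (q n : ℕ) (x : ℝ) : ℝ :=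
  ∑ k ∈ Finset.range (n + 1),
    poch (-(n : ℝ)) k * poch (-(n : ℝ) - q - 1/2) k /
      ((Nat.factorial k : ℝ) * poch (-(2 * (n : ℝ)) - α - q - 1/2) k) * x ^ (2*n - 2*k)

/-- `Podd α q n x = P_{2n+1}^{α,q}(x) = (1+x) P_{2n}^{α+1,q}(x)`. -/
noncomputable def Podd (α : ℝ) (q n : ℕ) (x : ℝ) : ℝ := (1 + x) * Peven (α + 1) q n x

/-- `P α q n x = P_n^{α,q}(x)`. -/
noncomputable def P (α : ℝ) (q : ℕ) (n : ℕ) (x : ℝ) : ℝ :=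
  if Even n then Peven α q (n / 2) x else Podd α q (n / 2) x

open Finset

lemma Polynomial.Monic.eq_prod_X_sub_C_of_natDegree_le_card {R : Type*} [CommRing R]
    [IsDomain R] {p : R[X]} (hp : p.Monic) {s : Finset R} (hs : ∀ x ∈ s, p.IsRoot x)
    (hcard : p.natDegree ≤ #s) :
    p = ∏ x ∈ s, (X - C x) := by
  have hle : s.val ≤ p.roots :=
    (Multiset.le_iff_subset s.nodup).2 fun x hx => (mem_roots hp.ne_zero).2 (hs x hx)
  have hroots : s.val = p.roots :=
    Multiset.eq_of_le_of_card_le hle ((card_roots' p).trans hcard)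
  rw [Finset.prod_eq_multiset_prod, hroots, prod_multiset_X_sub_C_of_monic_of_roots_card_eq hp]
  exact le_antisymm (card_roots' p) (hroots ▸ hcard)

lemma Polynomial.eval_iterate_derivative_prod_X_sub_C_pos {R : Type*} [CommRing R]
    [LinearOrder R] [IsStrictOrderedRing R] {S : Finset R} {k : ℕ} {x : R} (hk₀ : 0 < k)
    (hk : k ≤ #S) (hx : ∀ a ∈ S, a ≤ x) :
    0 < (derivative^[k] (∏ a ∈ S, (X - C a))).eval x := by
  classical
  obtain ⟨T, hTS, hTcard⟩ := exists_subset_card_eq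
    ((Nat.sub_le_sub_left hk₀ #S).trans (pred_card_le_card_erase (a := x)))
  rw [iterate_derivative_prod_X_sub_C hk, eval_mul, eval_natCast, eval_finsetSum]
  refine mul_pos (by exact_mod_cast k.factorial_pos) (sum_pos' (fun U hU => ?_) ⟨T, ?_, ?_⟩)
  · rw [eval_prod]
    exact prod_nonneg fun a ha => by
      simpa using hx a ((mem_powersetCard.1 hU).1 ha)
  · exact mem_powersetCard.2 ⟨hTS.trans (erase_subset x S), hTcard⟩
  · rw [eval_prod]
    refine prod_pos fun a ha => ?_
    obtain ⟨hax, haS⟩ := mem_erase.1 (hTS ha)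
    simpa using (hx a haS).lt_of_ne hax

noncomputable def sqrtRoots (s : Multiset ℝ) : Multiset ℝ := s.bind fun r => {√r, -√r}

lemma card_sqrtRoots (s : Multiset ℝ) : Multiset.card (sqrtRoots s) = 2 * Multiset.card s := by
  simp [sqrtRoots, two_mul]

lemma prod_map_sub_sqrtRoots {s : Multiset ℝ} (hs : ∀ r ∈ s, 0 ≤ r) (x : ℝ) :
    ((sqrtRoots s).map (x - ·)).prod = (s.map (x ^ 2 - ·)).prod := by
  rw [sqrtRoots, Multiset.map_bind, Multiset.prod_bind]
  refine congrArg Multiset.prod (Multiset.map_congr rfl fun r hr => ?_)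
  simp only [Multiset.insert_eq_cons, Multiset.map_cons, Multiset.map_singleton,
    Multiset.prod_cons, Multiset.prod_singleton]
  linear_combination (-1 : ℝ) * Real.sq_sqrt (hs r hr)

lemma sqrt_mem_sqrtRoots {s : Multiset ℝ} {r : ℝ} (hr : r ∈ s) : √r ∈ sqrtRoots s :=
  Multiset.mem_bind.2 ⟨r, hr, by simp⟩

lemma le_sqrt_of_mem_sqrtRoots {s : Multiset ℝ} {M y : ℝ} (hM : ∀ r ∈ s, r ≤ M)
    (hy : y ∈ sqrtRoots s) : y ≤ √M := by
  obtain ⟨r, hr, hy⟩ := Multiset.mem_bind.1 hy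
  have hrM : √r ≤ √M := Real.sqrt_le_sqrt (hM r hr)
  simp only [Multiset.insert_eq_cons, Multiset.mem_cons, Multiset.mem_singleton] at hy
  rcases hy with rfl | rfl
  · exact hrM
  · linarith [Real.sqrt_nonneg r]

lemma poch_succ (a : ℝ) (k : ℕ) : poch a (k + 1) = poch a k * (a + k) :=
  prod_range_succ _ _

lemma poch_succ' (a : ℝ) (k : ℕ) : poch a (k + 1) = a * poch (a + 1) k := by
  simp only [poch, prod_range_succ', Nat.cast_add, Nat.cast_one, Nat.cast_zero, add_zero]
  ring_nf

lemma poch_neg_natCast_of_lt {m k : ℕ} (h : m < k) : poch (-(m : ℝ)) k = 0 :=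
  prod_eq_zero (mem_range.2 h) (by ring)

lemma poch_ne_zero {a : ℝ} {k : ℕ} (h : ∀ i < k, a + i ≠ 0) : poch a k ≠ 0 :=
  prod_ne_zero_iff.2 fun i hi => h i (mem_range.1 hi)

lemma poch_mul_add (a : ℝ) (k : ℕ) : poch a k * (a + k) = a * poch (a + 1) k := by
  rw [← poch_succ, poch_succ']

noncomputable def jacobiCoeff (m : ℕ) (a b : ℝ) (k : ℕ) : ℝ :=
  poch (-(m : ℝ)) k * poch (-(m : ℝ) - a) k / (k.factorial * poch (-(2 * (m : ℝ)) - a - b) k)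

/-- For `a, b > -1`, the monic polynomial of degree `m` orthogonal on `(0, 1)` for the weight
`t ^ a * (1 - t) ^ b`. -/
noncomputable def jacobiPoly (m : ℕ) (a b : ℝ) : ℝ[X] :=
  ∑ k ∈ range (m + 1), C (jacobiCoeff m a b k) * X ^ (m - k)

lemma jacobiCoeff_zero (m : ℕ) (a b : ℝ) : jacobiCoeff m a b 0 = 1 := by
  simp [jacobiCoeff, poch]

lemma jacobiCoeff_of_lt {m k : ℕ} (a b : ℝ) (h : m < k) : jacobiCoeff m a b k = 0 := by
  rw [jacobiCoeff, poch_neg_natCast_of_lt h, zero_mul, zero_div]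

lemma natDegree_jacobiPoly_le (m : ℕ) (a b : ℝ) : (jacobiPoly m a b).natDegree ≤ m :=
  natDegree_sum_le_of_forall_le _ _ fun _ _ =>
    (natDegree_C_mul_X_pow_le _ _).trans (Nat.sub_le _ _)

lemma coeff_jacobiPoly_self (m : ℕ) (a b : ℝ) : (jacobiPoly m a b).coeff m = 1 := by
  rw [jacobiPoly, finsetSum_coeff, sum_eq_single 0]
  · simp [jacobiCoeff_zero]
  · intro k hk hk0
    rw [coeff_C_mul_X_pow, if_neg (by have := mem_range.1 hk; omega)]
  · simp

lemma monic_jacobiPoly (m : ℕ) (a b : ℝ) : (jacobiPoly m a b).Monic :=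
  monic_of_natDegree_le_of_coeff_eq_one m (natDegree_jacobiPoly_le m a b)
    (coeff_jacobiPoly_self m a b)

lemma natDegree_jacobiPoly (m : ℕ) (a b : ℝ) : (jacobiPoly m a b).natDegree = m :=
  natDegree_eq_of_le_of_coeff_ne_zero (natDegree_jacobiPoly_le m a b)
    (by rw [coeff_jacobiPoly_self]; exact one_ne_zero)

lemma natCast_sub_mul_jacobiCoeff (m : ℕ) (a b : ℝ) (k : ℕ) :
    ((m : ℝ) + 1 - k) * jacobiCoeff (m + 1) a b k
      = ((m : ℝ) + 1) * jacobiCoeff m (a + 1) (b + 1) k := by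
  have h := poch_mul_add (-((m : ℝ) + 1)) k
  simp only [jacobiCoeff]
  push_cast
  rw [show -((m : ℝ) + 1) + 1 = -(m : ℝ) by ring] at h
  rw [show -((m : ℝ) + 1) - a = -(m : ℝ) - (a + 1) by ring,
    show -(2 * ((m : ℝ) + 1)) - a - b = -(2 * (m : ℝ)) - (a + 1) - (b + 1) by ring]
  simp only [mul_div_assoc']
  congr 1
  linear_combination (-poch (-(m : ℝ) - (a + 1)) k) * h

lemma jacobiCoeff_ladder {m k : ℕ} {a b : ℝ} (hab : 0 < a + b + 2) (hk : k ≤ m) :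
    jacobiCoeff m (a + 1) (b + 1) k * (a + 1 + m - k)
      - jacobiCoeff m (a + 1) (b + 1) (k + 1) * (a + b + 1 + m - k)
      = -(a + b + 2 + m) * jacobiCoeff (m + 1) a b (k + 1) := by
  set D := -(2 * ((m : ℝ) + 1)) - a - b
  have hD : ∀ i ≤ k, D + i ≠ 0 := fun i hi => by
    have : (i : ℝ) ≤ m := by exact_mod_cast hi.trans hk
    simp only [D]; intro h; nlinarith
  have hDk : poch D k ≠ 0 := poch_ne_zero fun i hi => hD i hi.le
  have hDk' : D + k ≠ 0 := hD k le_rfl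
  simp only [jacobiCoeff]
  push_cast
  rw [show -(2 * (m : ℝ)) - (a + 1) - (b + 1) = D by ring,
    show -((m : ℝ) + 1) - a = -(m : ℝ) - (a + 1) by ring,
    show -(2 * ((m : ℝ) + 1)) - a - b = D by ring,
    poch_succ (-(m : ℝ)), poch_succ (-(m : ℝ) - (a + 1)), poch_succ D, poch_succ',
    show -((m : ℝ) + 1) + 1 = -(m : ℝ) by ring, Nat.factorial_succ]
  push_cast
  field_simp
  ring

lemma derivative_jacobiPoly (m : ℕ) (a b : ℝ) :
    derivative (jacobiPoly (m + 1) a b) = C ((m : ℝ) + 1) * jacobiPoly m (a + 1) (b + 1) := by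
  rw [jacobiPoly, derivative_sum, sum_range_succ, jacobiPoly, mul_sum]
  simp only [derivative_C_mul_X_pow, Nat.sub_self, Nat.cast_zero, mul_zero, C_0, zero_mul,
    add_zero]
  refine sum_congr rfl fun k hk => ?_
  have hk : k ≤ m := Nat.lt_succ_iff.1 (mem_range.1 hk)
  rw [← mul_assoc, ← C_mul, ← natCast_sub_mul_jacobiCoeff, Nat.cast_sub (by omega),
    show m + 1 - k - 1 = m - k by omega]
  push_cast
  ring_nf

lemma iterate_derivative_jacobiPoly (m δ : ℕ) (a b : ℝ) :
    derivative^[δ] (jacobiPoly (m + δ) a b)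
      = C ((m + δ).descFactorial δ : ℝ) * jacobiPoly m (a + δ) (b + δ) := by
  induction δ generalizing a b with
  | zero => simp
  | succ δ ih =>
    rw [← add_assoc, Function.iterate_succ_apply, derivative_jacobiPoly, iterate_derivative_C_mul,
      ih, ← mul_assoc, ← C_mul, Nat.succ_descFactorial_succ]
    push_cast
    ring_nf

lemma ladder_C_mul_X_pow (a b c : ℝ) (p : ℕ) :
    (C (a + 1) * (1 - X) - C (b + 1) * X) * (C c * X ^ p)
        + X * (1 - X) * derivative (C c * X ^ p)
      = C (c * (a + 1 + p)) * X ^ p - C (c * (a + b + 2 + p)) * X ^ (p + 1) := by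
  rcases p with _ | p
  · simp only [pow_zero, mul_one, derivative_C, map_mul, map_add, map_one, map_natCast, map_ofNat]
    push_cast
    ring
  · simp only [derivative_C_mul_X_pow, map_mul, map_add, map_one, map_natCast, map_ofNat,
      add_tsub_cancel_right]
    push_cast
    ring

lemma jacobiPoly_ladder (m : ℕ) {a b : ℝ} (hab : 0 < a + b + 2) :
    (C (a + 1) * (1 - X) - C (b + 1) * X) * jacobiPoly m (a + 1) (b + 1)
        + X * (1 - X) * derivative (jacobiPoly m (a + 1) (b + 1))
      = C (-(a + b + 2 + m)) * jacobiPoly (m + 1) a b := by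
  set c := jacobiCoeff m (a + 1) (b + 1)
  set f : ℕ → ℝ[X] := fun k => C (c k * (a + 1 + m - k)) * X ^ (m - k)
  set g : ℕ → ℝ[X] := fun k => C (c k * (a + b + 2 + m - k)) * X ^ (m + 1 - k)
  have hLHS : (C (a + 1) * (1 - X) - C (b + 1) * X) * jacobiPoly m (a + 1) (b + 1)
        + X * (1 - X) * derivative (jacobiPoly m (a + 1) (b + 1))
      = ∑ k ∈ range (m + 1), f k - ∑ k ∈ range (m + 1), g k := by
    rw [jacobiPoly, derivative_sum, mul_sum, mul_sum, ← sum_add_distrib, ← sum_sub_distrib]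
    refine sum_congr rfl fun k hk => ?_
    have hk : k ≤ m := Nat.lt_succ_iff.1 (mem_range.1 hk)
    rw [ladder_C_mul_X_pow, Nat.cast_sub hk, show m - k + 1 = m + 1 - k by omega,
      ← add_sub_assoc, ← add_sub_assoc]
  have hg : ∑ k ∈ range (m + 1), g k = g 0 + ∑ k ∈ range (m + 1), g (k + 1) := by
    rw [sum_range_succ' g, sum_range_succ _ m, add_comm]
    simp [g, c, jacobiCoeff_of_lt _ _ (Nat.lt_succ_self m)]
  have hterm : ∀ k ∈ range (m + 1), f k - g (k + 1)
      = C (-(a + b + 2 + m))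
          * (C (jacobiCoeff (m + 1) a b (k + 1)) * X ^ (m + 1 - (k + 1))) := by
    intro k hk
    have hk : k ≤ m := Nat.lt_succ_iff.1 (mem_range.1 hk)
    simp only [f, g]
    rw [show m + 1 - (k + 1) = m - k by omega, ← sub_mul, ← C_sub, ← mul_assoc, ← C_mul,
      ← jacobiCoeff_ladder hab hk]
    congr 2
    push_cast
    ring
  rw [hLHS, hg, jacobiPoly,
    sum_range_succ' (fun k => C (jacobiCoeff (m + 1) a b k) * X ^ (m + 1 - k)),
    mul_add, mul_sum, ← sum_congr rfl hterm, sum_sub_distrib]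
  simp only [g, c, jacobiCoeff_zero, Nat.cast_zero, sub_zero, Nat.sub_zero, one_mul, map_neg,
    map_one]
  ring

noncomputable def jacobiWeight (a b t : ℝ) : ℝ := t ^ a * (1 - t) ^ b

section jacobiWeight

variable {a b t : ℝ}

lemma jacobiWeight_pos (ht : t ∈ Set.Ioo 0 1) : 0 < jacobiWeight a b t :=
  mul_pos (Real.rpow_pos_of_pos ht.1 a) (Real.rpow_pos_of_pos (sub_pos.2 ht.2) b)

lemma jacobiWeight_add_one (ht : t ∈ Set.Ioo 0 1) :
    jacobiWeight (a + 1) (b + 1) t = jacobiWeight a b t * (t * (1 - t)) := by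
  rw [jacobiWeight, jacobiWeight, Real.rpow_add_one ht.1.ne',
    Real.rpow_add_one (sub_pos.2 ht.2).ne']
  ring

lemma continuous_jacobiWeight (ha : 0 ≤ a) (hb : 0 ≤ b) : Continuous (jacobiWeight a b) :=
  (Real.continuous_rpow_const ha).mul
    ((Real.continuous_rpow_const hb).comp (continuous_sub_left 1))

lemma jacobiWeight_zero (ha : a ≠ 0) : jacobiWeight a b 0 = 0 := by
  simp [jacobiWeight, Real.zero_rpow ha]

lemma jacobiWeight_one (hb : b ≠ 0) : jacobiWeight a b 1 = 0 := by
  simp [jacobiWeight, Real.zero_rpow hb]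

lemma hasDerivAt_jacobiWeight (ht : t ∈ Set.Ioo 0 1) :
    HasDerivAt (jacobiWeight (a + 1) (b + 1))
      (jacobiWeight a b t * ((a + 1) * (1 - t) - (b + 1) * t)) t := by
  have h1t : 0 < 1 - t := sub_pos.2 ht.2
  have hl := Real.hasDerivAt_rpow_const (p := a + 1) (Or.inl ht.1.ne')
  have hr := (Real.hasDerivAt_rpow_const (p := b + 1) (Or.inl h1t.ne')).comp t
    ((hasDerivAt_id t).const_sub 1)
  refine (hl.mul hr).congr_deriv ?_
  rw [add_sub_cancel_right, add_sub_cancel_right, Function.comp_apply,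
    Real.rpow_add_one ht.1.ne', Real.rpow_add_one h1t.ne', jacobiWeight]
  ring

end jacobiWeight

lemma hasDerivAt_jacobiWeight_mul_jacobiPoly (m : ℕ) {a b t : ℝ} (hab : 0 < a + b + 2)
    (ht : t ∈ Set.Ioo 0 1) :
    HasDerivAt (fun t => jacobiWeight (a + 1) (b + 1) t * (jacobiPoly m (a + 1) (b + 1)).eval t)
      (-(a + b + 2 + m) * (jacobiWeight a b t * (jacobiPoly (m + 1) a b).eval t)) t := by
  have hladder := congrArg (eval t) (jacobiPoly_ladder m hab)
  simp only [eval_add, eval_mul, eval_sub, eval_C, eval_X, eval_one] at hladder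
  refine ((hasDerivAt_jacobiWeight ht).mul
    ((jacobiPoly m (a + 1) (b + 1)).hasDerivAt t)).congr_deriv ?_
  rw [jacobiWeight_add_one ht]
  linear_combination jacobiWeight a b t * hladder

lemma mem_roots_jacobiPoly_Ioo {m : ℕ} {a b x : ℝ} :
    x ∈ {x ∈ (jacobiPoly m a b).roots.toFinset | x ∈ Set.Ioo 0 1}
      ↔ (jacobiPoly m a b).IsRoot x ∧ x ∈ Set.Ioo 0 1 := by
  rw [mem_filter, Multiset.mem_toFinset, mem_roots (monic_jacobiPoly m a b).ne_zero]

lemma le_card_roots_jacobiPoly (m : ℕ) {a b : ℝ} (ha : -1 < a) (hb : -1 < b) :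
    m ≤ #{x ∈ (jacobiPoly m a b).roots.toFinset | x ∈ Set.Ioo 0 1} := by
  induction m generalizing a b with
  | zero => exact Nat.zero_le _
  | succ m ih =>
    set s := {x ∈ (jacobiPoly m (a + 1) (b + 1)).roots.toFinset | x ∈ Set.Ioo 0 1}
    set g := fun t => jacobiWeight (a + 1) (b + 1) t * (jacobiPoly m (a + 1) (b + 1)).eval t
    have hg_cont : Continuous g :=
      (continuous_jacobiWeight (by linarith) (by linarith)).mul (Polynomial.continuous _)
    have hs01 : ∀ x ∈ s, x ∈ Set.Ioo 0 1 := fun x hx => (mem_roots_jacobiPoly_Ioo.1 hx).2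
    have hg : ∀ x ∈ insert 0 (insert 1 s), x ∈ Set.Icc 0 1 ∧ g x = 0 := by
      intro x hx
      rcases mem_insert.1 hx with rfl | hx
      · refine ⟨⟨le_rfl, zero_le_one⟩, ?_⟩
        simp [g, jacobiWeight_zero (by linarith : a + 1 ≠ 0)]
      rcases mem_insert.1 hx with rfl | hx
      · refine ⟨⟨zero_le_one, le_rfl⟩, ?_⟩
        simp [g, jacobiWeight_one (by linarith : b + 1 ≠ 0)]
      obtain ⟨hroot, hx01⟩ := mem_roots_jacobiPoly_Ioo.1 hx
      exact ⟨Set.Ioo_subset_Icc_self hx01, by simp [g, hroot.eq_zero]⟩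
    have hcard : #(insert 0 (insert 1 s)) = #s + 2 := by
      rw [card_insert_of_notMem, card_insert_of_notMem]
      · exact fun h => (hs01 1 h).2.false
      · rw [mem_insert, not_or]
        exact ⟨zero_ne_one, fun h => (hs01 0 h).1.false⟩
    have hinter := card_le_of_interleaved (s := insert 0 (insert 1 s))
      (t := {x ∈ (jacobiPoly (m + 1) a b).roots.toFinset | x ∈ Set.Ioo 0 1}) ?_
    · have hs : m ≤ #s := ih (by linarith) (by linarith)
      rw [hcard] at hinter
      omega
    intro x hx y hy hxy _
    obtain ⟨hx01, hgx⟩ := hg x hx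
    obtain ⟨hy01, hgy⟩ := hg y hy
    have hIoo : Set.Ioo x y ⊆ Set.Ioo 0 1 := Set.Ioo_subset_Ioo hx01.1 hy01.2
    obtain ⟨z, hz, hz0⟩ := exists_hasDerivAt_eq_zero hxy hg_cont.continuousOn
      (hgx.trans hgy.symm) fun z hz =>
        hasDerivAt_jacobiWeight_mul_jacobiPoly m (by linarith) (hIoo hz)
    refine ⟨z, mem_roots_jacobiPoly_Ioo.2 ⟨?_, hIoo hz⟩, hz⟩
    have hB : -(a + b + 2 + m) ≠ 0 := by linarith [m.cast_nonneg (α := ℝ)]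
    exact ((mul_eq_zero.1 ((mul_eq_zero.1 hz0).resolve_left hB)).resolve_left
      (jacobiWeight_pos (hIoo hz)).ne')

lemma exists_jacobiPoly_eq_prod (m : ℕ) {a b : ℝ} (ha : -1 < a) (hb : -1 < b) :
    ∃ s : Finset ℝ, #s = m ∧ ↑s ⊆ Set.Ioo (0 : ℝ) 1 ∧
      jacobiPoly m a b = ∏ x ∈ s, (X - C x) := by
  set s := {x ∈ (jacobiPoly m a b).roots.toFinset | x ∈ Set.Ioo 0 1}
  have hprod : jacobiPoly m a b = ∏ x ∈ s, (X - C x) :=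
    (monic_jacobiPoly m a b).eq_prod_X_sub_C_of_natDegree_le_card
      (fun x hx => (mem_roots_jacobiPoly_Ioo.1 hx).1)
      ((natDegree_jacobiPoly m a b).trans_le (le_card_roots_jacobiPoly m ha hb))
  refine ⟨s, ?_, fun x hx => (mem_roots_jacobiPoly_Ioo.1 hx).2, hprod⟩
  simpa [natDegree_jacobiPoly] using congrArg natDegree hprod.symm

lemma exists_gt_of_isRoot_jacobiPoly {m δ : ℕ} {a b x : ℝ} {s : Finset ℝ} (hδ : 0 < δ)
    (hs : jacobiPoly (m + δ) a b = ∏ r ∈ s, (X - C r))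
    (hx : (jacobiPoly m (a + δ) (b + δ)).IsRoot x) : ∃ r ∈ s, x < r := by
  by_contra! hle
  have hcard : #s = m + δ := by simpa [natDegree_jacobiPoly] using congrArg natDegree hs.symm
  have hpos := eval_iterate_derivative_prod_X_sub_C_pos hδ (by omega) hle
  rw [← hs, iterate_derivative_jacobiPoly, eval_mul, hx.eq_zero, mul_zero] at hpos
  exact hpos.false

lemma Peven_eq_eval_jacobiPoly (β : ℝ) (r M : ℕ) (x : ℝ) :
    Peven β r M x = (jacobiPoly M (r + 1 / 2) β).eval (x ^ 2) := by
  rw [Peven, jacobiPoly, eval_finsetSum]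
  refine sum_congr rfl fun k hk => ?_
  have hk : k ≤ M := Nat.lt_succ_iff.1 (mem_range.1 hk)
  rw [eval_mul, eval_C, eval_pow, eval_X, ← pow_mul, jacobiCoeff,
    show -(M : ℝ) - r - 1 / 2 = -(M : ℝ) - (r + 1 / 2) by ring,
    show -(2 * (M : ℝ)) - β - r - 1 / 2 = -(2 * (M : ℝ)) - (r + 1 / 2) - β by ring,
    show 2 * M - 2 * k = 2 * (M - k) by omega]

lemma Peven_eq_prod_sqrtRoots {β : ℝ} {r M : ℕ} {s : Finset ℝ} (hs0 : ∀ x ∈ s, 0 ≤ x)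
    (hs : jacobiPoly M (r + 1 / 2) β = ∏ x ∈ s, (X - C x)) (x : ℝ) :
    Peven β r M x = ((sqrtRoots s.val).map (x - ·)).prod := by
  rw [Peven_eq_eval_jacobiPoly, hs, eval_prod, prod_map_sub_sqrtRoots hs0,
    Finset.prod_eq_multiset_prod]
  simp

theorem largest_zero_monotone_even_general (α : ℝ) (hα : -1 < α) (q : ℕ) (n : ℕ)
    (i j : ℕ) (hij : i < j) (hj : j ≤ n - 1) :
    ∃ S T : Multiset ℝ,
      Multiset.card S = 2 * (n - i) ∧ Multiset.card T = 2 * (n - j) ∧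
      (∀ x : ℝ, Peven (α + i) (q + i) (n - i) x = (S.map (fun s => x - s)).prod) ∧
      (∀ x : ℝ, Peven (α + j) (q + j) (n - j) x = (T.map (fun s => x - s)).prod) ∧
      ∃ a b : ℝ, a ∈ T ∧ b ∈ S ∧ (∀ t ∈ T, t ≤ a) ∧ (∀ t ∈ S, t ≤ b) ∧ a < b := by
  have hpar (k : ℕ) : -1 < ((q + k : ℕ) : ℝ) + 1 / 2 ∧ -1 < α + k :=
    ⟨by linarith [(q + k).cast_nonneg (α := ℝ)], by linarith [k.cast_nonneg (α := ℝ)]⟩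
  obtain ⟨s, hs_card, hs01, hs⟩ := exists_jacobiPoly_eq_prod (n - i) (hpar i).1 (hpar i).2
  obtain ⟨t, ht_card, ht01, ht⟩ := exists_jacobiPoly_eq_prod (n - j) (hpar j).1 (hpar j).2
  have ht_ne : t.Nonempty := card_pos.1 (by omega)
  obtain ⟨r, hr, hlt⟩ : ∃ r ∈ s, t.max' ht_ne < r := by
    have hn : n - i = n - j + (j - i) := by omega
    have ha : ((q + j : ℕ) : ℝ) + 1 / 2
        = ((q + i : ℕ) : ℝ) + 1 / 2 + ((j - i : ℕ) : ℝ) := by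
      push_cast [Nat.cast_sub hij.le]; ring
    have hb : α + j = α + i + ((j - i : ℕ) : ℝ) := by push_cast [Nat.cast_sub hij.le]; ring
    rw [hn] at hs
    rw [ha, hb] at ht
    exact exists_gt_of_isRoot_jacobiPoly (by omega) hs
      (by rw [ht, IsRoot, eval_prod]; exact prod_eq_zero (t.max'_mem ht_ne) (by simp))
  refine ⟨sqrtRoots s.val, sqrtRoots t.val, by simp [card_sqrtRoots, hs_card],
    by simp [card_sqrtRoots, ht_card], Peven_eq_prod_sqrtRoots (fun x hx => (hs01 hx).1.le) hs,
    Peven_eq_prod_sqrtRoots (fun x hx => (ht01 hx).1.le) ht, √(t.max' ht_ne),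
    √(s.max' ⟨r, hr⟩), sqrt_mem_sqrtRoots (t.max'_mem ht_ne),
    sqrt_mem_sqrtRoots (s.max'_mem _),
    fun _ => le_sqrt_of_mem_sqrtRoots (t.le_max' · ·),
    fun _ => le_sqrt_of_mem_sqrtRoots (s.le_max' · ·),
    Real.sqrt_lt_sqrt (ht01 (t.max'_mem ht_ne)).1.le (hlt.trans_le (s.le_max' r hr))⟩

/-- For `0 ≤ i < j ≤ n−1`, the polynomials `P_{2n−2i}^{α+i,q+i}` and `P_{2n−2j}^{α+j,q+j}`
have only real zeros, and the largest zero of the latter is strictly smaller than the largest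
zero of the former: `x_{2n−2j,2n−2j}^{α+j,q+j} < x_{2n−2i,2n−2i}^{α+i,q+i}`. -/
theorem largest_zero_monotone_even (α : ℝ) (hα : -1 < α) (q : ℕ) (n : ℕ) (hn : 1 ≤ n)
    (i j : ℕ) (hij : i < j) (hj : j ≤ n - 1) :
    ∃ S T : Multiset ℝ,
      Multiset.card S = 2 * (n - i) ∧ Multiset.card T = 2 * (n - j) ∧
      (∀ x : ℝ, Peven (α + i) (q + i) (n - i) x = (S.map (fun s => x - s)).prod) ∧
      (∀ x : ℝ, Peven (α + j) (q + j) (n - j) x = (T.map (fun s => x - s)).prod) ∧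
      ∃ a b : ℝ, a ∈ T ∧ b ∈ S ∧ (∀ t ∈ T, t ≤ a) ∧ (∀ t ∈ S, t ≤ b) ∧ a < b :=
  largest_zero_monotone_even_general α hα q n i j hij hj
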